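/- arXiv:2102.12525 — 3 statements merged into one kernel-verified Lean document; each statement's English description precedes it below -/
import Mathlib

section
/- Let S ⊆ ℝ^n be any set and let H ∈ ℝ^{m×n} satisfy S-REC(S, γ, δ̄) for some γ > 0 and δ̄ ≥ 0. Let f̃ ∈ S, let n ∈ ℝ^m, and set g = H f̃ + n. If f̂ ∈ S satisfies ‖g − H f̂‖₂ ≤ ‖g − H f‖₂ for every f ∈ S (i.e., f̂ minimizes the measurement residual over S), then ‖f̂ − f̃‖₂ ≤ (2‖n‖₂ + δ̄)/γ. -/
/-- The Euclidean (ℓ²) norm of a vector in ℝ^n. -/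
noncomputable def eNorm {n : ℕ} (x : Fin n → ℝ) : ℝ :=
  Real.sqrt (∑ i, x i ^ 2)

/-! By minimality of `xhat` and the triangle inequality,
`d(A xhat, A x₀) ≤ d(y, A xhat) + d(y, A x₀) ≤ 2 d(y, A x₀)`; the restricted lower bound
`γ d(x₁, x₂) - δ ≤ d(A x₁, A x₂)` on `S` turns this into `γ d(xhat, x₀) ≤ 2 d(y, A x₀) + δ`.
For a matrix `H` with noisy measurements `y = H x₀ + noise`, `d(y, A x₀)` is the noise norm. -/

section Recovery

variable {X Y : Type*} [PseudoMetricSpace Y] {A : X → Y} {S : Set X}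
  {x₀ xhat : X} {y : Y}

theorem dist_apply_le_two_mul_of_isMinOn (hx₀ : x₀ ∈ S)
    (hmin : IsMinOn (fun x => dist y (A x)) S xhat) :
    dist (A xhat) (A x₀) ≤ 2 * dist y (A x₀) := by
  have hres : dist y (A xhat) ≤ dist y (A x₀) := hmin hx₀
  calc dist (A xhat) (A x₀) ≤ dist (A xhat) y + dist y (A x₀) := dist_triangle _ _ _
    _ = dist y (A xhat) + dist y (A x₀) := by rw [dist_comm]
    _ ≤ 2 * dist y (A x₀) := by linarith

theorem dist_le_of_isMinOn_of_restricted_lower_bound [PseudoMetricSpace X] {γ δ : ℝ}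
    (hγ : 0 < γ)
    (hA : ∀ x₁ ∈ S, ∀ x₂ ∈ S, γ * dist x₁ x₂ - δ ≤ dist (A x₁) (A x₂))
    (hx₀ : x₀ ∈ S) (hxhat : xhat ∈ S) (hmin : IsMinOn (fun x => dist y (A x)) S xhat) :
    dist xhat x₀ ≤ (2 * dist y (A x₀) + δ) / γ := by
  rw [le_div_iff₀' hγ]
  linarith [hA xhat hxhat x₀ hx₀, dist_apply_le_two_mul_of_isMinOn hx₀ hmin]

end Recovery

theorem eNorm_sub_eq_dist {n : ℕ} (x y : Fin n → ℝ) :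
    eNorm (x - y) = dist (WithLp.toLp 2 x) (WithLp.toLp 2 y) := by
  simp [EuclideanSpace.dist_eq, eNorm, Real.dist_eq, sq_abs]

theorem srec_recovery_bound_general {m n : ℕ} (S : Set (Fin n → ℝ))
    (H : Matrix (Fin m) (Fin n) ℝ) (γ δbar : ℝ) (hγ : 0 < γ)
    (hSREC : ∀ f₁ ∈ S, ∀ f₂ ∈ S,
      γ * eNorm (f₁ - f₂) - δbar ≤ eNorm (H.mulVec (f₁ - f₂)))
    (ftil : Fin n → ℝ) (hftil : ftil ∈ S) (noise : Fin m → ℝ)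
    (g : Fin m → ℝ) (hg : g = H.mulVec ftil + noise)
    (fhat : Fin n → ℝ) (hfhat : fhat ∈ S)
    (hmin : ∀ f ∈ S, eNorm (g - H.mulVec fhat) ≤ eNorm (g - H.mulVec f)) :
    eNorm (fhat - ftil) ≤ (2 * eNorm noise + δbar) / γ := by
  let A : EuclideanSpace ℝ (Fin n) → EuclideanSpace ℝ (Fin m) :=
    fun f => WithLp.toLp 2 (H.mulVec f.ofLp)
  have hA : ∀ f₁ ∈ WithLp.ofLp ⁻¹' S, ∀ f₂ ∈ WithLp.ofLp ⁻¹' S,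
      γ * dist f₁ f₂ - δbar ≤ dist (A f₁) (A f₂) := by
    intro f₁ h₁ f₂ h₂
    simpa only [A, Matrix.mulVec_sub, eNorm_sub_eq_dist, WithLp.toLp_ofLp]
      using hSREC _ h₁ _ h₂
  have hmin' : IsMinOn (fun f => dist (WithLp.toLp 2 g) (A f)) (WithLp.ofLp ⁻¹' S)
      (WithLp.toLp 2 fhat) :=
    isMinOn_iff.mpr fun f hf => by
      simpa only [A, eNorm_sub_eq_dist, WithLp.toLp_ofLp] using hmin _ hf
  have hnoise : noise = g - H.mulVec ftil := by rw [hg]; abel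
  rw [hnoise, eNorm_sub_eq_dist, eNorm_sub_eq_dist]
  exact dist_le_of_isMinOn_of_restricted_lower_bound (x₀ := WithLp.toLp 2 ftil) hγ hA hftil
    hfhat hmin'

/-- deterministic recovery bound under the set-restricted eigenvalue
condition S-REC(S, γ, δ̄). -/
theorem srec_recovery_bound {m n : ℕ} (S : Set (Fin n → ℝ))
    (H : Matrix (Fin m) (Fin n) ℝ) (γ δbar : ℝ) (hγ : 0 < γ) (hδ : 0 ≤ δbar)
    (hSREC : ∀ f₁ ∈ S, ∀ f₂ ∈ S,
      γ * eNorm (f₁ - f₂) - δbar ≤ eNorm (H.mulVec (f₁ - f₂)))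
    (ftil : Fin n → ℝ) (hftil : ftil ∈ S) (noise : Fin m → ℝ)
    (g : Fin m → ℝ) (hg : g = H.mulVec ftil + noise)
    (fhat : Fin n → ℝ) (hfhat : fhat ∈ S)
    (hmin : ∀ f ∈ S, eNorm (g - H.mulVec fhat) ≤ eNorm (g - H.mulVec f)) :
    eNorm (fhat - ftil) ≤ (2 * eNorm noise + δbar) / γ :=
  srec_recovery_bound_general S H γ δbar hγ hSREC ftil hftil noise g hg fhat hfhat hmin
end

section
/- There exists a universal constant c > 0 with the following property. Let K ≥ 2 be an integer, let μ be a probability measure on ℝ^K, and let G : ℝ^K → ℝ^n be continuously differentiable with Jacobian J(w) at w. Suppose: (i) a := ∫ ‖J(w)‖_F dμ(w) > 0 and ∫ (‖J(w)‖_F − a)² dμ(w) ≤ b; (ii) for a fixed ε > 0, ∫ [sup_{‖w′−w‖₂ ≤ ε} ‖G(w′) − G(w) − J(w)(w′ − w)‖₂²] dμ(w) ≤ β² for some β ≥ 0; (iii) for some α > 1, the pushforward of μ under LReL_α is the Gaussian measure on ℝ^K with mean v̄ and positive-definite covariance Σ. Then a sample w from μ satisfies all three of: (P1) ‖J(w)‖_F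 ≤ √K·a; (P2) ‖G(w′) − G(w) − J(w)(w′ − w)‖₂ ≤ √K·β for all w′ with ‖w′ − w‖₂ ≤ ε; (P3) ‖Σ^{−1/2}(LReL_α(w) − v̄)‖₂ ≤ 2√K; with probability at least 1 − (a² + b)/(K a²) − 1/K − 2e^{−cK}. -/
/-! The three properties fail on events of small probability, each controlled by a Markov
inequality: P1 for `‖J‖_F²`, whose mean is at most `a² + b`; P2 for the integrated squared
linearization error, at most `β²`; P3 for `exp (‖x‖² / 4)` of a standard Gaussian `x`, whose mean
is `√2 ^ K`, giving the tail `e^{-K/2}` at radius `2√K`. A union bound finishes. -/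

open MeasureTheory ProbabilityTheory

/-- The leaky-ReLU map acting componentwise: `x_i ↦ x_i` if `x_i ≥ 0`, else `α * x_i`. -/
noncomputable def lrel (α : ℝ) {K : ℕ} (x : Fin K → ℝ) : Fin K → ℝ :=
  fun i => if 0 ≤ x i then x i else α * x i

/-- The Frobenius norm of a linear map `ℝ^K → ℝ^n`, computed columnwise on the
standard basis: `‖T‖_F = √(∑_j ‖T e_j‖₂²)`. -/
noncomputable def frobCLM {K n : ℕ} (T : (Fin K → ℝ) →L[ℝ] (Fin n → ℝ)) : ℝ :=
  Real.sqrt (∑ j, ∑ i, T (Pi.single j 1) i ^ 2)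

open Real

section Markov

variable {Ω : Type*} [MeasurableSpace Ω] {μ : Measure Ω}

theorem measure_le_le_ofReal_integral_div [IsFiniteMeasure μ] {f : Ω → ℝ} (hf0 : 0 ≤ᵐ[μ] f)
    (hf : Integrable f μ) {t : ℝ} (ht : 0 < t) :
    μ {x | t ≤ f x} ≤ ENNReal.ofReal ((∫ x, f x ∂μ) / t) := by
  rw [← ofReal_measureReal]
  exact ENNReal.ofReal_le_ofReal <|
    (le_div_iff₀' ht).2 (mul_meas_ge_le_integral_of_nonneg hf0 hf t)

theorem measure_mul_lt_le_ofReal_inv [IsFiniteMeasure μ] {f : Ω → ℝ} (hf0 : 0 ≤ f)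
    (hf : Integrable f μ) {s t : ℝ} (hfs : ∫ x, f x ∂μ ≤ s) (ht : 0 < t) :
    μ {x | t * s < f x} ≤ ENNReal.ofReal (1 / t) := by
  rcases (integral_nonneg hf0 |>.trans hfs).eq_or_lt with rfl | hs
  · have hf_ae : f =ᵐ[μ] 0 :=
      (integral_eq_zero_iff_of_nonneg hf0 hf).1 (le_antisymm hfs (integral_nonneg hf0))
    refine le_of_eq_of_le (measure_mono_null (fun x hx => ?_) (ae_iff.1 hf_ae)) zero_le
    exact (mul_zero t ▸ hx : 0 < f x).ne'
  · calc μ {x | t * s < f x} ≤ μ {x | t * s ≤ f x} :=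
          measure_mono fun _ hx => (show t * s < _ from hx).le
      _ ≤ ENNReal.ofReal ((∫ x, f x ∂μ) / (t * s)) :=
        measure_le_le_ofReal_integral_div (.of_forall hf0) hf (by positivity)
      _ ≤ ENNReal.ofReal (1 / t) := by
        refine ENNReal.ofReal_le_ofReal ?_
        rw [div_le_iff₀ (by positivity)]
        calc ∫ x, f x ∂μ ≤ s := hfs
          _ = 1 / t * (t * s) := by field_simp

end Markov

section SecondMoment

variable {Ω : Type*} [MeasurableSpace Ω] {μ : Measure Ω} [IsProbabilityMeasure μ] {f : Ω → ℝ}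
  {a : ℝ}

theorem MeasureTheory.Integrable.sq_of_sub_sq (hf : Integrable f μ)
    (hfa : Integrable (fun x => (f x - a) ^ 2) μ) :
    Integrable (fun x => f x ^ 2) μ := by
  have := hfa.add ((hf.const_mul (2 * a)).sub (integrable_const (a ^ 2)))
  refine this.congr (.of_forall fun x => ?_)
  simp only [Pi.add_apply, Pi.sub_apply]
  ring

theorem integral_sq_eq_integral_sub_sq_add_sq (hf : Integrable f μ)
    (hfa : Integrable (fun x => (f x - a) ^ 2) μ) (hmean : ∫ x, f x ∂μ = a) :
    ∫ x, f x ^ 2 ∂μ = ∫ x, (f x - a) ^ 2 ∂μ + a ^ 2 := by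
  have hlin : Integrable (fun x => 2 * a * f x - a ^ 2) μ :=
    (hf.const_mul (2 * a)).sub (integrable_const _)
  calc ∫ x, f x ^ 2 ∂μ = ∫ x, ((f x - a) ^ 2 + (2 * a * f x - a ^ 2)) ∂μ := by
        congr 1; funext x; ring
    _ = ∫ x, (f x - a) ^ 2 ∂μ + (2 * a * ∫ x, f x ∂μ - a ^ 2) := by
        rw [integral_add hfa hlin, integral_sub (hf.const_mul _) (integrable_const _),
          integral_const_mul, integral_const, probReal_univ, one_smul]
    _ = ∫ x, (f x - a) ^ 2 ∂μ + a ^ 2 := by rw [hmean]; ring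

theorem measure_not_le_sqrt_mul_mean_le (hf : Integrable f μ) (hmean : ∫ x, f x ∂μ = a)
    (hfa : Integrable (fun x => (f x - a) ^ 2) μ) {b : ℝ} (hvar : ∫ x, (f x - a) ^ 2 ∂μ ≤ b)
    (ha : 0 < a) {t : ℝ} (ht : 0 < t) :
    μ {x | ¬ f x ≤ √t * a} ≤ ENNReal.ofReal ((a ^ 2 + b) / (t * a ^ 2)) := by
  have hsub : {x | ¬ f x ≤ √t * a} ⊆ {x | t * a ^ 2 ≤ f x ^ 2} := fun x hx => by
    have hsq := pow_lt_pow_left₀ (not_le.1 hx) (by positivity) two_ne_zero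
    rw [mul_pow, sq_sqrt ht.le] at hsq
    exact hsq.le
  calc μ {x | ¬ f x ≤ √t * a} ≤ ENNReal.ofReal ((∫ x, f x ^ 2 ∂μ) / (t * a ^ 2)) :=
        (measure_mono hsub).trans <| measure_le_le_ofReal_integral_div
          (.of_forall fun _ => sq_nonneg _) (hf.sq_of_sub_sq hfa) (by positivity)
    _ ≤ ENNReal.ofReal ((a ^ 2 + b) / (t * a ^ 2)) := by
        gcongr
        rw [integral_sq_eq_integral_sub_sq_add_sq hf hfa hmean]
        linarith

end SecondMoment

theorem ofReal_one_sub_le_measure_and {Ω : Type*} [MeasurableSpace Ω] {μ : Measure Ω}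
    [IsProbabilityMeasure μ] {P Q R : Ω → Prop} {p q r : ℝ} (hp : 0 ≤ p) (hq : 0 ≤ q)
    (hr : 0 ≤ r) (hP : μ {x | ¬ P x} ≤ ENNReal.ofReal p) (hQ : μ {x | ¬ Q x} ≤ ENNReal.ofReal q)
    (hR : μ {x | ¬ R x} ≤ ENNReal.ofReal r) :
    ENNReal.ofReal (1 - p - q - r) ≤ μ {x | P x ∧ Q x ∧ R x} := by
  set S := {x | P x ∧ Q x ∧ R x}
  have hcompl : Sᶜ ⊆ ({x | ¬ P x} ∪ {x | ¬ Q x}) ∪ {x | ¬ R x} := fun x hx => by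
    simp only [S, Set.mem_compl_iff, Set.mem_ofPred_eq, Set.mem_union] at hx ⊢
    tauto
  have hbad : μ Sᶜ ≤ ENNReal.ofReal (p + q + r) := by
    rw [ENNReal.ofReal_add (by positivity) hr, ENNReal.ofReal_add hp hq]
    calc μ Sᶜ ≤ μ ({x | ¬ P x} ∪ {x | ¬ Q x}) + μ {x | ¬ R x} :=
          (measure_mono hcompl).trans (measure_union_le _ _)
      _ ≤ _ := by gcongr; exact (measure_union_le _ _).trans (add_le_add hP hQ)
  calc ENNReal.ofReal (1 - p - q - r) = 1 - ENNReal.ofReal (p + q + r) := by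
        rw [← ENNReal.ofReal_one, ← ENNReal.ofReal_sub _ (by positivity)]
        ring_nf
    _ ≤ 1 - μ Sᶜ := tsub_le_tsub_left hbad 1
    _ ≤ μ S := by
        rw [tsub_le_iff_right]
        simpa using measure_union_le (μ := μ) S Sᶜ

theorem eNorm_sq {m : ℕ} (x : Fin m → ℝ) : eNorm x ^ 2 = ∑ i, x i ^ 2 :=
  sq_sqrt (Finset.sum_nonneg fun _ _ => sq_nonneg _)

theorem abs_le_eNorm {m : ℕ} (x : Fin m → ℝ) (i : Fin m) : |x i| ≤ eNorm x := by
  rw [← sqrt_sq_eq_abs]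
  exact sqrt_le_sqrt (Finset.single_le_sum (fun j _ => sq_nonneg (x j)) (Finset.mem_univ i))

theorem le_iSup_of_eNorm_sub_le {m : ℕ} {h : (Fin m → ℝ) → ℝ} (hh : Continuous h)
    {w w' : Fin m → ℝ} {ε : ℝ} (hw' : eNorm (w' - w) ≤ ε) :
    h w' ≤ ⨆ u : {u : Fin m → ℝ // eNorm (u - w) ≤ ε}, h u.1 := by
  have hball : ∀ u : {u : Fin m → ℝ // eNorm (u - w) ≤ ε}, u.1 ∈ Metric.closedBall w ε :=
    fun u => (dist_pi_le_iff ((sqrt_nonneg _).trans u.2)).2 fun i =>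
      (abs_le_eNorm (u.1 - w) i).trans u.2
  have hbdd : BddAbove (Set.range fun u : {u : Fin m → ℝ // eNorm (u - w) ≤ ε} => h u.1) :=
    ((isCompact_closedBall w ε).bddAbove_image hh.continuousOn).mono
      (Set.range_subset_iff.2 fun u => Set.mem_image_of_mem h (hball u))
  exact le_ciSup hbdd ⟨w', hw'⟩

theorem measure_not_forall_remainder_le {K n : ℕ} {μ : Measure (Fin K → ℝ)} [IsFiniteMeasure μ]
    {G : (Fin K → ℝ) → (Fin n → ℝ)} (hG : Continuous G)
    (L : (Fin K → ℝ) → (Fin K → ℝ) →L[ℝ] (Fin n → ℝ)) {ε β t : ℝ} (hβ : 0 ≤ β) (ht : 0 < t)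
    (hint : Integrable (fun w => ⨆ w' : {u : Fin K → ℝ // eNorm (u - w) ≤ ε},
      eNorm (G w'.1 - G w - L w (w'.1 - w)) ^ 2) μ)
    (hsup : (∫ w, (⨆ w' : {u : Fin K → ℝ // eNorm (u - w) ≤ ε},
      eNorm (G w'.1 - G w - L w (w'.1 - w)) ^ 2) ∂μ) ≤ β ^ 2) :
    μ {w | ¬ ∀ w' : Fin K → ℝ, eNorm (w' - w) ≤ ε →
      eNorm (G w' - G w - L w (w' - w)) ≤ √t * β} ≤ ENNReal.ofReal (1 / t) := by
  refine le_trans (measure_mono fun w hw => ?_) (measure_mul_lt_le_ofReal_inv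
    (fun w => Real.iSup_nonneg fun _ => sq_nonneg _) hint hsup ht)
  obtain ⟨w', hw'ε, hw'⟩ := not_forall₂.1 hw
  have hsq := pow_lt_pow_left₀ (not_le.1 hw') (by positivity) two_ne_zero
  rw [mul_pow, sq_sqrt ht.le] at hsq
  have hcont : Continuous fun u => eNorm (G u - G w - L w (u - w)) ^ 2 := by
    unfold eNorm
    fun_prop
  exact hsq.trans_le (le_iSup_of_eNorm_sub_le hcont hw'ε)

theorem gaussianPDFReal_zero_one_mul_exp_mul_sq (t x : ℝ) :
    gaussianPDFReal 0 1 x * exp (t * x ^ 2) = (√(2 * π))⁻¹ * exp (-(1 / 2 - t) * x ^ 2) := by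
  rw [gaussianPDFReal, mul_assoc, ← exp_add]
  congr 2
  · simp
  · simp only [NNReal.coe_one]; ring

theorem integrable_exp_mul_sq_gaussianReal {t : ℝ} (ht : t < 1 / 2) :
    Integrable (fun x => exp (t * x ^ 2)) (gaussianReal 0 1) := by
  rw [gaussianReal_of_var_ne_zero 0 one_ne_zero, integrable_withDensity_iff
    (measurable_gaussianPDF 0 1) (.of_forall fun _ => ENNReal.ofReal_lt_top)]
  simp only [gaussianPDF, ENNReal.toReal_ofReal (gaussianPDFReal_nonneg 0 1 _), mul_comm (exp _),
    gaussianPDFReal_zero_one_mul_exp_mul_sq]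
  exact (integrable_exp_neg_mul_sq (by linarith)).const_mul _

/-- For `t ≥ 1/2` both sides are junk zeros: the integrand is not integrable and
`√(1 - 2t) = 0`. -/
theorem integral_exp_mul_sq_gaussianReal (t : ℝ) :
    ∫ x, exp (t * x ^ 2) ∂(gaussianReal 0 1) = (√(1 - 2 * t))⁻¹ := by
  rw [integral_gaussianReal_eq_integral_smul one_ne_zero]
  simp only [smul_eq_mul, gaussianPDFReal_zero_one_mul_exp_mul_sq]
  rw [integral_const_mul, integral_gaussian, ← sqrt_inv, ← sqrt_mul (by positivity), ← sqrt_inv]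
  congr 1
  field_simp

theorem stdGaussian_pi_le_sum_sq_le {ι : Type*} [Fintype ι] (r : ℝ) :
    (Measure.pi fun _ : ι => gaussianReal 0 1) {x | r ≤ ∑ i, x i ^ 2}
      ≤ ENNReal.ofReal (exp (Fintype.card ι / 2 - r / 4)) := by
  have hsub : {x : ι → ℝ | r ≤ ∑ i, x i ^ 2} ⊆ {x | exp (r / 4) ≤ ∏ i, exp (1 / 4 * x i ^ 2)} :=
    fun x (hx : r ≤ _) => show exp (r / 4) ≤ _ by
      rw [← exp_sum, exp_le_exp, ← Finset.mul_sum]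
      linarith
  have hmean : ∫ x, ∏ i, exp (1 / 4 * x i ^ 2) ∂(Measure.pi fun _ : ι => gaussianReal 0 1)
      = √2 ^ Fintype.card ι := by
    rw [integral_fintype_prod_eq_pow (fun x => exp (1 / 4 * x ^ 2)),
      integral_exp_mul_sq_gaussianReal, show (1 : ℝ) - 2 * (1 / 4) = 2⁻¹ by norm_num, sqrt_inv,
      inv_inv]
  have hsqrt_two : √2 ^ Fintype.card ι ≤ exp (Fintype.card ι / 2) := by
    have hle : √2 ≤ exp (1 / 2) := by
      rw [exp_half]
      exact sqrt_le_sqrt (by linarith [add_one_le_exp (1 : ℝ)])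
    calc √2 ^ Fintype.card ι ≤ exp (1 / 2) ^ Fintype.card ι :=
          pow_le_pow_left₀ (sqrt_nonneg _) hle _
      _ = exp (Fintype.card ι / 2) := by rw [← exp_nat_mul]; ring_nf
  refine (measure_mono hsub).trans <| (measure_le_le_ofReal_integral_div
    (.of_forall fun _ => Finset.prod_nonneg fun _ _ => (exp_pos _).le)
    (Integrable.fintype_prod (f := fun _ x => exp (1 / 4 * x ^ 2)) fun _ =>
      integrable_exp_mul_sq_gaussianReal (by norm_num))
    (exp_pos _)).trans (ENNReal.ofReal_le_ofReal ?_)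
  rw [hmean, div_le_iff₀ (exp_pos _), ← exp_add, sub_add_cancel]
  exact hsqrt_two

theorem measure_not_eNorm_le_two_sqrt_le {Ω : Type*} [MeasurableSpace Ω] {μ : Measure Ω} {K : ℕ}
    {T : Ω → Fin K → ℝ} (hT : Measurable T)
    (hmap : μ.map T = Measure.pi fun _ => gaussianReal 0 1) :
    μ {x | ¬ eNorm (T x) ≤ 2 * √K} ≤ ENNReal.ofReal (2 * exp (-(1 / 2) * K)) := by
  have hS : MeasurableSet {y : Fin K → ℝ | 4 * K ≤ ∑ i, y i ^ 2} :=
    measurableSet_le measurable_const (by fun_prop)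
  calc μ {x | ¬ eNorm (T x) ≤ 2 * √K} ≤ μ (T ⁻¹' {y | 4 * K ≤ ∑ i, y i ^ 2}) :=
        measure_mono fun x hx => by
          have hsq := pow_lt_pow_left₀ (not_le.1 hx) (by positivity) two_ne_zero
          rw [eNorm_sq, mul_pow, sq_sqrt (Nat.cast_nonneg _)] at hsq
          exact show 4 * (K : ℝ) ≤ _ by linarith
    _ = (Measure.pi fun _ => gaussianReal 0 1) {y : Fin K → ℝ | 4 * K ≤ ∑ i, y i ^ 2} := by
        rw [← Measure.map_apply hT hS, hmap]
    _ ≤ ENNReal.ofReal (exp (Fintype.card (Fin K) / 2 - 4 * K / 4)) :=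
        stdGaussian_pi_le_sum_sq_le _
    _ ≤ ENNReal.ofReal (2 * exp (-(1 / 2) * K)) := by
        rw [Fintype.card_fin, show (K : ℝ) / 2 - 4 * K / 4 = -(1 / 2) * K by ring]
        exact ENNReal.ofReal_le_ofReal (by linarith [exp_pos (-(1 / 2) * (K : ℝ))])

@[fun_prop]
theorem measurable_lrel (α : ℝ) {K : ℕ} : Measurable (lrel α (K := K)) :=
  measurable_pi_lambda _ fun i =>
    Measurable.ite (measurableSet_le measurable_const (measurable_pi_apply i))
      (measurable_pi_apply i) (by fun_prop)

/-- Lemma 4.1: under path-length regularity, approximate local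
linearity, and Gaussianity of the leaky-ReLU-transformed latent distribution
(expressed via the whitening matrix `R = Σ^{−1/2}`, i.e. the positive-definite
matrix with `R Σ R = 1`), a sample `w ∼ μ` satisfies P1, P2, P3 with probability
at least `1 − (a²+b)/(Ka²) − 1/K − 2e^{−cK}`. -/
theorem sample_typical_properties :
    ∃ c : ℝ, 0 < c ∧
      ∀ (K n : ℕ), 2 ≤ K →
      ∀ (μ : Measure (Fin K → ℝ)), IsProbabilityMeasure μ →
      ∀ (G : (Fin K → ℝ) → (Fin n → ℝ)), ContDiff ℝ 1 G →
      ∀ (a b : ℝ), 0 < a →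
      Integrable (fun w => frobCLM (fderiv ℝ G w)) μ →
      (∫ w, frobCLM (fderiv ℝ G w) ∂μ) = a →
      Integrable (fun w => (frobCLM (fderiv ℝ G w) - a) ^ 2) μ →
      (∫ w, (frobCLM (fderiv ℝ G w) - a) ^ 2 ∂μ) ≤ b →
      ∀ (ε : ℝ), 0 < ε →
      ∀ (β : ℝ), 0 ≤ β →
      Integrable (fun w => ⨆ w' : {u : Fin K → ℝ // eNorm (u - w) ≤ ε},
        eNorm (G w'.1 - G w - fderiv ℝ G w (w'.1 - w)) ^ 2) μ →
      (∫ w, (⨆ w' : {u : Fin K → ℝ // eNorm (u - w) ≤ ε},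
        eNorm (G w'.1 - G w - fderiv ℝ G w (w'.1 - w)) ^ 2) ∂μ) ≤ β ^ 2 →
      ∀ (α : ℝ), 1 < α →
      ∀ (vbar : Fin K → ℝ) (Sig R : Matrix (Fin K) (Fin K) ℝ),
        Sig.PosDef → R.PosDef → R * Sig * R = 1 →
        Measure.map (fun w => R.mulVec (lrel α w - vbar)) μ
          = Measure.pi (fun _ : Fin K => gaussianReal 0 1) →
      ENNReal.ofReal (1 - (a ^ 2 + b) / (K * a ^ 2) - 1 / K - 2 * Real.exp (-c * K))
        ≤ μ {w | frobCLM (fderiv ℝ G w) ≤ Real.sqrt K * a ∧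
            (∀ w' : Fin K → ℝ, eNorm (w' - w) ≤ ε →
              eNorm (G w' - G w - fderiv ℝ G w (w' - w)) ≤ Real.sqrt K * β) ∧
            eNorm (R.mulVec (lrel α w - vbar)) ≤ 2 * Real.sqrt K} := by
  refine ⟨1 / 2, by norm_num, ?_⟩
  intro K n hK μ _ G hG a b ha hint hmean hvar_int hvar ε _ β hβ hrem_int hrem α _ vbar Sig R
    _ _ _ hmap
  have hK0 : (0 : ℝ) < K := by positivity
  have hb : 0 ≤ b := (integral_nonneg fun _ => sq_nonneg _).trans hvar
  exact ofReal_one_sub_le_measure_and (by positivity) (by positivity) (by positivity)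
    (measure_not_le_sqrt_mul_mean_le hint hmean hvar_int hvar ha hK0)
    (measure_not_forall_remainder_le hG.continuous _ hβ hK0 hrem_int hrem)
    (measure_not_eNorm_le_two_sqrt_le (by fun_prop) hmap)
end

section
/- Let K ≥ P ≥ 1 be integers, let a > 0, ε > 0, and let J₀ ∈ ℝ^{n×P} be a matrix with ‖J₀‖_F ≤ √K·a. Let E = { J₀ x : x ∈ ℝ^P, ‖x‖₂ ≤ ε } ⊆ ℝ^n. Then there exists a finite set N ⊆ ℝ^n such that every point of E is within Euclidean distance a·ε of some point of N, and |N| ≤ ( 12·√(K/P) )^P. -/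
/-- The Frobenius norm of a matrix. -/
noncomputable def frobNorm {n P : ℕ} (J : Matrix (Fin n) (Fin P) ℝ) : ℝ :=
  Real.sqrt (∑ i, ∑ j, J i j ^ 2)

/-!
Diagonalise `J₀ᵀJ₀` in an orthonormal basis with eigenvalues `σᵢ²` and put `τᵢ = √(σᵢ² + a²)`.
Then `J₀ = W ∘ diag(τ) ∘ U` with `U` an isometry and `‖W‖ ≤ 1`, so it suffices to cover the
ellipsoid `diag(τ)(B_ε)`, all of whose semi-axes are at least `aε`. A maximal `aε`-separated subset
of it is an `aε`-net, and the disjoint balls of radius `aε/2` around its points lie in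
`diag(τ)(B_{3ε/2})`; comparing volumes bounds its size by `∏ τᵢ · (3/a)^P`. Finally
`∏ τᵢ ≤ (∑ τᵢ² / P)^{P/2}` by AM-GM, and `∑ τᵢ² = ‖J₀‖_F² + P a² ≤ 2 K a²`.
-/

open Finset Matrix Metric MeasureTheory
open scoped NNReal ENNReal

theorem Finset.prod_le_sum_div_card_pow {ι : Type*} (s : Finset ι) {f : ι → ℝ}
    (hf : ∀ i ∈ s, 0 ≤ f i) : ∏ i ∈ s, f i ≤ ((∑ i ∈ s, f i) / #s) ^ #s := by
  rcases s.eq_empty_or_nonempty with rfl | hs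
  · simp
  have hcard : (0 : ℝ) < #s := by exact_mod_cast hs.card_pos
  have hamgm := Real.geom_mean_le_arith_mean_weighted s (fun _ ↦ (#s : ℝ)⁻¹) f
    (fun _ _ ↦ by positivity) (by simp [hcard.ne']) hf
  calc ∏ i ∈ s, f i = (∏ i ∈ s, f i ^ (#s : ℝ)⁻¹) ^ #s := by
        rw [Real.finsetProd_rpow s f hf, ← Real.rpow_natCast, ← Real.rpow_mul
          (prod_nonneg hf), inv_mul_cancel₀ hcard.ne', Real.rpow_one]
    _ ≤ ((∑ i ∈ s, f i) / #s) ^ #s := by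
        gcongr
        · exact prod_nonneg fun i hi ↦ Real.rpow_nonneg (hf i hi) _
        · simpa [← mul_sum, div_eq_inv_mul] using hamgm

theorem Finset.prod_le_sqrt_sum_sq_div_card_pow {ι : Type*} (s : Finset ι) {f : ι → ℝ}
    (hf : ∀ i ∈ s, 0 ≤ f i) : ∏ i ∈ s, f i ≤ √((∑ i ∈ s, f i ^ 2) / #s) ^ #s := by
  have hsq := s.prod_le_sum_div_card_pow (f := (f · ^ 2)) fun i _ ↦ sq_nonneg (f i)
  rw [prod_pow, ← Real.sq_sqrt (by positivity : 0 ≤ (∑ i ∈ s, f i ^ 2) / #s), ← pow_mul,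
    mul_comm, pow_mul] at hsq
  exact (pow_le_pow_iff_left₀ (prod_nonneg hf) (by positivity) two_ne_zero).mp hsq

namespace Metric

theorem exists_finset_isCover_card_le {X : Type*} [PseudoEMetricSpace X] {A : Set X} {δ : ℝ≥0}
    {m : ℕ} (h : ∀ C : Finset X, ↑C ⊆ A → IsSeparated (δ : ℝ≥0∞) (C : Set X) → #C ≤ m) :
    ∃ N : Finset X, IsCover δ A N ∧ #N ≤ m := by
  have hpack : packingNumber δ A ≤ m := by
    simp only [packingNumber, iSup_le_iff]
    intro C hCA hC
    by_contra! hlt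
    obtain ⟨t, htC, htcard⟩ := Set.exists_subset_encard_eq (Order.add_one_le_of_lt hlt)
    have htfin : t.Finite := Set.finite_of_encard_eq_coe htcard
    have := h htfin.toFinset (by simpa using htC.trans hCA) (by simpa using hC.subset htC)
    rw [htfin.encard_eq_coe_toFinset_card] at htcard
    norm_cast at htcard
    omega
  have hpack_ne_top : packingNumber δ A ≠ ⊤ := ne_top_of_le_ne_top (by simp) hpack
  have hfin : (maximalSeparatedSet δ A).Finite := by
    rw [← Set.encard_ne_top_iff, encard_maximalSeparatedSet hpack_ne_top]
    exact hpack_ne_top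
  refine ⟨hfin.toFinset, by simpa using isCover_maximalSeparatedSet hpack_ne_top, ?_⟩
  have := (encard_maximalSeparatedSet hpack_ne_top).trans_le hpack
  rwa [hfin.encard_eq_coe_toFinset_card, Nat.cast_le] at this

theorem IsSeparated.sum_measure_ball_le {X : Type*} [PseudoMetricSpace X] [MeasurableSpace X]
    [OpensMeasurableSpace X] (μ : Measure X) {C : Finset X} {δ : ℝ≥0} {B : Set X}
    (hC : IsSeparated (δ : ℝ≥0∞) (C : Set X)) (hB : ∀ x ∈ C, ball x (δ / 2) ⊆ B) :
    ∑ x ∈ C, μ (ball x (δ / 2)) ≤ μ B := by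
  rw [← measure_biUnion_finset _ fun _ _ ↦ measurableSet_ball]
  · exact measure_mono (Set.iUnion₂_subset hB)
  · intro x hx y hy hxy
    apply ball_disjoint_ball
    have hsep : (δ : ℝ≥0∞) < edist x y := hC hx hy hxy
    rw [edist_nndist, ENNReal.coe_lt_coe, ← NNReal.coe_lt_coe, coe_nndist] at hsep
    linarith

end Metric

namespace LinearMap

section CoveringImage

variable {E : Type*} [NormedAddCommGroup E] [NormedSpace ℝ E] [FiniteDimensional ℝ E]
  {D : E →ₗ[ℝ] E} {c : ℝ}

theorem ball_subset_image_closedBall_of_mul_norm_le (hc : 0 < c) (hD : ∀ x, c * ‖x‖ ≤ ‖D x‖)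
    {r ρ : ℝ} {y : E} (hy : y ∈ D '' closedBall 0 r) :
    ball y ρ ⊆ D '' closedBall 0 (r + ρ / c) := by
  have hinj : Function.Injective D := (injective_iff_map_eq_zero D).mpr fun x hx ↦ by
    have := hD x
    rw [hx, norm_zero] at this
    exact norm_le_zero_iff.mp (nonpos_of_mul_nonpos_right this hc)
  obtain ⟨x, hx, rfl⟩ := hy
  intro z hz
  obtain ⟨u, hu⟩ := injective_iff_surjective.mp hinj (z - D x)
  have hu_norm : ‖u‖ ≤ ρ / c := by
    rw [le_div_iff₀' hc]
    calc c * ‖u‖ ≤ ‖z - D x‖ := hu ▸ hD u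
      _ ≤ ρ := (mem_ball_iff_norm.mp hz).le
  refine ⟨x + u, ?_, by rw [map_add, hu, add_sub_cancel]⟩
  rw [mem_closedBall_zero_iff] at hx ⊢
  exact (norm_add_le x u).trans (add_le_add hx hu_norm)

theorem card_mul_pow_le_of_isSeparated (hc : 0 < c) (hD : ∀ x, c * ‖x‖ ≤ ‖D x‖)
    {r : ℝ} (hr : 0 ≤ r) {δ : ℝ≥0} (hδ : 0 < δ) {C : Finset E}
    (hCA : ↑C ⊆ D '' closedBall 0 r) (hC : IsSeparated (δ : ℝ≥0∞) (C : Set E)) :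
    #C * (δ / 2 : ℝ) ^ Module.finrank ℝ E ≤
      |LinearMap.det D| * (r + δ / 2 / c) ^ Module.finrank ℝ E := by
  let _ : MeasurableSpace E := borel E
  have _ : BorelSpace E := ⟨rfl⟩
  set μ : Measure E := Measure.addHaar
  have hpacking := hC.sum_measure_ball_le μ fun x hx ↦
    ball_subset_image_closedBall_of_mul_norm_le hc hD (hCA hx)
  have hδ2 : (0 : ℝ) < δ / 2 := by positivity
  rw [sum_congr rfl fun x _ ↦ Measure.addHaar_ball_of_pos μ x hδ2, sum_const, nsmul_eq_mul,
    Measure.addHaar_image_linearMap, Measure.addHaar_closedBall μ _ (by positivity), ← mul_assoc,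
    ← mul_assoc, ENNReal.mul_le_mul_iff_left (measure_ball_pos μ 0 one_pos).ne'
    measure_ball_lt_top.ne, ← ENNReal.ofReal_natCast, ← ENNReal.ofReal_mul (by positivity),
    ← ENNReal.ofReal_mul (by positivity), ENNReal.ofReal_le_ofReal_iff (by positivity)] at hpacking
  exact hpacking

theorem exists_finset_isCover_image_closedBall (hc : 0 < c) (hD : ∀ x, c * ‖x‖ ≤ ‖D x‖)
    {r : ℝ} (hr : 0 ≤ r) {δ : ℝ≥0} (hδ : 0 < δ) :
    ∃ N : Finset E, IsCover δ (D '' closedBall 0 r) N ∧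
      (#N : ℝ) ≤ |LinearMap.det D| * ((2 * r + δ / c) / δ) ^ Module.finrank ℝ E := by
  have hδ' : (0 : ℝ) < δ := hδ
  have hbound : |LinearMap.det D| * ((2 * r + δ / c) / δ) ^ Module.finrank ℝ E =
      |LinearMap.det D| * (r + δ / 2 / c) ^ Module.finrank ℝ E / (δ / 2) ^ Module.finrank ℝ E := by
    rw [mul_div_assoc, ← div_pow, show (r + δ / 2 / c) / (δ / 2) = (2 * r + δ / c) / δ by
      field_simp]
  obtain ⟨N, hN, hcard⟩ := exists_finset_isCover_card_le
    (m := ⌊|LinearMap.det D| * ((2 * r + δ / c) / δ) ^ Module.finrank ℝ E⌋₊) fun C hCA hC ↦ by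
      refine Nat.le_floor ?_
      rw [hbound, le_div_iff₀ (by positivity)]
      exact card_mul_pow_le_of_isSeparated hc hD hr hδ hCA hC
  exact ⟨N, hN, (Nat.cast_le.mpr hcard).trans (Nat.floor_le (by positivity))⟩

end CoveringImage

end LinearMap

section Diagonal

variable {ι : Type*} [Fintype ι] [DecidableEq ι]

@[simp]
theorem Matrix.toEuclideanLin_diagonal_apply (τ : ι → ℝ) (y : EuclideanSpace ℝ ι) (i : ι) :
    toEuclideanLin (diagonal τ) y i = τ i * y i := by
  simp [toLpLin_apply, mulVec_diagonal]

theorem Matrix.det_toEuclideanLin_diagonal (τ : ι → ℝ) :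
    LinearMap.det (toEuclideanLin (diagonal τ)) = ∏ i, τ i := by
  rw [toEuclideanLin, toLpLin_eq_toLin, LinearMap.det_toLin, det_diagonal]

theorem Matrix.mul_norm_le_norm_toEuclideanLin_diagonal {τ : ι → ℝ} {c : ℝ} (hc : 0 ≤ c)
    (hτ : ∀ i, c ≤ τ i) (y : EuclideanSpace ℝ ι) :
    c * ‖y‖ ≤ ‖toEuclideanLin (diagonal τ) y‖ := by
  refine (pow_le_pow_iff_left₀ (by positivity) (norm_nonneg _) two_ne_zero).mp ?_
  rw [mul_pow, EuclideanSpace.real_norm_sq_eq, EuclideanSpace.real_norm_sq_eq, mul_sum]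
  gcongr with i
  simp only [toEuclideanLin_diagonal_apply, mul_pow]
  gcongr
  exact hτ i

theorem Matrix.exists_finset_norm_sub_toEuclideanLin_diagonal_le {τ : ι → ℝ} {a ε : ℝ}
    (ha : 0 < a) (hε : 0 < ε) (hτ : ∀ i, a ≤ τ i) :
    ∃ N : Finset (EuclideanSpace ℝ ι),
      (∀ y, ‖y‖ ≤ ε → ∃ z ∈ N, ‖toEuclideanLin (diagonal τ) y - z‖ ≤ a * ε) ∧
      (#N : ℝ) ≤ (∏ i, τ i) * (3 / a) ^ Fintype.card ι := by
  have haε : 0 < a * ε := mul_pos ha hε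
  obtain ⟨N, hN, hcard⟩ := (toEuclideanLin (diagonal τ)).exists_finset_isCover_image_closedBall ha
    (mul_norm_le_norm_toEuclideanLin_diagonal ha.le hτ) hε.le (Real.toNNReal_pos.mpr haε)
  rw [Real.coe_toNNReal _ haε.le, det_toEuclideanLin_diagonal,
    abs_of_nonneg (prod_nonneg fun i _ ↦ ha.le.trans (hτ i)), finrank_euclideanSpace,
    show (2 * ε + a * ε / a) / (a * ε) = 3 / a by field_simp; ring] at hcard
  refine ⟨N, fun y hy ↦ ?_, hcard⟩
  obtain ⟨z, hzN, hz⟩ := hN (Set.mem_image_of_mem _ (mem_closedBall_zero_iff.mpr hy))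
  refine ⟨z, hzN, ?_⟩
  rw [← dist_eq_norm, ← Real.coe_toNNReal _ haε.le]
  exact NNReal.coe_le_coe.mpr (edist_le_coe.mp hz)

end Diagonal

namespace LinearMap

section GramOperator

variable {E F : Type*} [NormedAddCommGroup E] [InnerProductSpace ℝ E] [FiniteDimensional ℝ E]
  [NormedAddCommGroup F] [InnerProductSpace ℝ F] [FiniteDimensional ℝ F]
  {d : ℕ} (L : E →ₗ[ℝ] F)

theorem norm_sq_eq_sum_eigenvalues_mul_sq (hd : Module.finrank ℝ E = d) (x : E) :
    ‖L x‖ ^ 2 = ∑ i, L.isSymmetric_adjoint_comp_self.eigenvalues hd i *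
      (L.isSymmetric_adjoint_comp_self.eigenvectorBasis hd).repr x i ^ 2 := by
  set v := L.isSymmetric_adjoint_comp_self.eigenvectorBasis hd
  rw [← real_inner_self_eq_norm_sq, ← adjoint_inner_right, ← comp_apply, ← v.repr.inner_map_map,
    PiLp.inner_apply]
  refine sum_congr rfl fun i _ ↦ ?_
  rw [IsSymmetric.eigenvectorBasis_apply_self_apply, real_inner_eq_re_inner]
  simp only [RCLike.inner_apply, conj_trivial, RCLike.re_to_real, RCLike.ofReal_real_eq_id, id_eq]
  ring

theorem sum_eigenvalues_adjoint_comp_self (hd : Module.finrank ℝ E = d) {ι : Type*} [Fintype ι]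
    (b : OrthonormalBasis ι ℝ E) :
    ∑ i, L.isSymmetric_adjoint_comp_self.eigenvalues hd i = ∑ j, ‖L (b j)‖ ^ 2 := by
  have := L.isSymmetric_adjoint_comp_self.trace_eq_sum_eigenvalues hd
  rw [trace_eq_sum_inner _ b] at this
  simp only [RCLike.ofReal_real_eq_id, id_eq, comp_apply, adjoint_inner_right,
    real_inner_self_eq_norm_sq] at this
  exact this.symm

theorem exists_contraction_comp_diagonal_comp_isometry (hd : Module.finrank ℝ E = d)
    {ι : Type*} [Fintype ι] (b : OrthonormalBasis ι ℝ E) {c : ℝ} (hc : 0 < c) :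
    ∃ (U : E ≃ₗᵢ[ℝ] EuclideanSpace ℝ (Fin d)) (τ : Fin d → ℝ)
      (W : EuclideanSpace ℝ (Fin d) →ₗ[ℝ] F),
      (∀ i, c ≤ τ i) ∧ ∑ i, τ i ^ 2 = ∑ j, ‖L (b j)‖ ^ 2 + d * c ^ 2 ∧
      (∀ y, ‖W y‖ ≤ ‖y‖) ∧ ∀ x, L x = W (toEuclideanLin (diagonal τ) (U x)) := by
  set μ := L.isSymmetric_adjoint_comp_self.eigenvalues hd
  set v := L.isSymmetric_adjoint_comp_self.eigenvectorBasis hd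
  have hμ : ∀ i, 0 ≤ μ i := L.isPositive_adjoint_comp_self.nonneg_eigenvalues hd
  set τ : Fin d → ℝ := fun i ↦ √(μ i + c ^ 2)
  have hτ_sq : ∀ i, τ i ^ 2 = μ i + c ^ 2 := fun i ↦ Real.sq_sqrt (by linarith [hμ i, sq_nonneg c])
  have hτ_pos : ∀ i, 0 < τ i := fun i ↦ Real.sqrt_pos.mpr (by linarith [hμ i, sq_pos_of_pos hc])
  set W := L ∘ₗ v.repr.symm.toLinearMap ∘ₗ toEuclideanLin (diagonal fun i ↦ (τ i)⁻¹)
  refine ⟨v.repr, τ, W, fun i ↦ ?_, ?_, fun y ↦ ?_, fun x ↦ ?_⟩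
  · exact Real.le_sqrt_of_sq_le (by linarith [hμ i])
  · simp only [hτ_sq, sum_add_distrib, sum_const, card_univ, Fintype.card_fin, nsmul_eq_mul]
    rw [← L.sum_eigenvalues_adjoint_comp_self hd b]
  · refine (pow_le_pow_iff_left₀ (norm_nonneg _) (norm_nonneg _) two_ne_zero).mp ?_
    simp only [W, comp_apply, LinearEquiv.coe_coe, LinearIsometryEquiv.coe_toLinearEquiv]
    rw [L.norm_sq_eq_sum_eigenvalues_mul_sq hd, EuclideanSpace.real_norm_sq_eq]
    gcongr with i
    change μ i * (v.repr (v.repr.symm _)) i ^ 2 ≤ _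
    rw [LinearIsometryEquiv.apply_symm_apply, toEuclideanLin_diagonal_apply, mul_pow,
      ← mul_assoc]
    refine mul_le_of_le_one_left (sq_nonneg _) ?_
    rw [inv_pow, ← div_eq_mul_inv, div_le_one (pow_pos (hτ_pos i) 2), hτ_sq]
    linarith [sq_nonneg c]
  · simp only [W, comp_apply, LinearEquiv.coe_coe, LinearIsometryEquiv.coe_toLinearEquiv]
    congr 1
    rw [eq_comm, LinearIsometryEquiv.symm_apply_eq]
    ext i
    simp [inv_mul_cancel_left₀ (hτ_pos i).ne']

end GramOperator

end LinearMap

theorem eNorm_eq_norm_toLp {n : ℕ} (x : Fin n → ℝ) : eNorm x = ‖WithLp.toLp 2 x‖ := by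
  simp [eNorm, EuclideanSpace.norm_eq]

theorem sq_frobNorm_eq_sum_norm_sq {n P : ℕ} (J : Matrix (Fin n) (Fin P) ℝ) :
    frobNorm J ^ 2 = ∑ j, ‖toEuclideanLin J (EuclideanSpace.basisFun (Fin P) ℝ j)‖ ^ 2 := by
  rw [frobNorm, Real.sq_sqrt (by positivity), sum_comm]
  refine sum_congr rfl fun j _ ↦ ?_
  simp [EuclideanSpace.real_norm_sq_eq, toLpLin_apply]

theorem prod_mul_pow_le_of_sum_sq_le {K P : ℕ} {a : ℝ} (ha : 0 < a) {τ : Fin P → ℝ}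
    (hτ : ∀ i, 0 ≤ τ i) (hτ_sum : ∑ i, τ i ^ 2 ≤ 2 * K * a ^ 2) :
    (∏ i, τ i) * (3 / a) ^ P ≤ (12 * √((K : ℝ) / P)) ^ P := by
  have hgm := univ.prod_le_sqrt_sum_sq_div_card_pow fun i _ ↦ hτ i
  rw [card_univ, Fintype.card_fin] at hgm
  calc (∏ i, τ i) * (3 / a) ^ P ≤ (√((∑ i, τ i ^ 2) / P) * (3 / a)) ^ P := by
        rw [mul_pow]
        gcongr
    _ ≤ (12 * √((K : ℝ) / P)) ^ P := by
        refine pow_le_pow_left₀ (by positivity) ?_ P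
        rw [← Real.sqrt_sq (by positivity : 0 ≤ 3 / a), ← Real.sqrt_mul (by positivity),
          show (12 : ℝ) = √(12 ^ 2) by simp, ← Real.sqrt_mul (by positivity)]
        refine Real.sqrt_le_sqrt ?_
        calc (∑ i, τ i ^ 2) / P * (3 / a) ^ 2 ≤ 2 * K * a ^ 2 / P * (3 / a) ^ 2 := by gcongr
          _ = 18 * ((K : ℝ) / P) := by field_simp; ring
          _ ≤ 12 ^ 2 * ((K : ℝ) / P) := by gcongr; norm_num

theorem ellipsoid_covering_general (K P n : ℕ) (hPK : P ≤ K)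
    (a ε : ℝ) (ha : 0 < a) (hε : 0 < ε)
    (J₀ : Matrix (Fin n) (Fin P) ℝ)
    (hJ : frobNorm J₀ ≤ Real.sqrt K * a) :
    ∃ N : Finset (Fin n → ℝ),
      (∀ x : Fin P → ℝ, eNorm x ≤ ε →
        ∃ z ∈ N, eNorm (J₀.mulVec x - z) ≤ a * ε) ∧
      (N.card : ℝ) ≤ (12 * Real.sqrt ((K : ℝ) / P)) ^ P := by
  obtain ⟨U, τ, W, hτ, hτ_sum_eq, hW, hJ₀⟩ :=
    (toEuclideanLin J₀).exists_contraction_comp_diagonal_comp_isometry finrank_euclideanSpace_fin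
      (EuclideanSpace.basisFun (Fin P) ℝ) ha
  have hτ_sum_le : ∑ i, τ i ^ 2 ≤ 2 * K * a ^ 2 := by
    have hfrob : frobNorm J₀ ^ 2 ≤ K * a ^ 2 := by
      have := pow_le_pow_left₀ (Real.sqrt_nonneg _) hJ 2
      rwa [mul_pow, Real.sq_sqrt (Nat.cast_nonneg K)] at this
    have hPK' : (P : ℝ) ≤ K := by exact_mod_cast hPK
    rw [hτ_sum_eq, ← sq_frobNorm_eq_sum_norm_sq]
    nlinarith
  obtain ⟨N, hN, hcard⟩ := exists_finset_norm_sub_toEuclideanLin_diagonal_le ha hε hτ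
  refine ⟨(N.image W).image WithLp.ofLp, fun x hx ↦ ?_, ?_⟩
  · obtain ⟨z, hzN, hz⟩ := hN (U (WithLp.toLp 2 x)) (by simpa [eNorm_eq_norm_toLp] using hx)
    refine ⟨W z, mem_image_of_mem _ (mem_image_of_mem _ hzN), ?_⟩
    calc eNorm (J₀ *ᵥ x - (W z).ofLp)
        _ = ‖toEuclideanLin J₀ (WithLp.toLp 2 x) - W z‖ := by
          rw [eNorm_eq_norm_toLp, WithLp.toLp_sub, WithLp.toLp_ofLp]
          rfl
        _ = ‖W (toEuclideanLin (diagonal τ) (U (WithLp.toLp 2 x)) - z)‖ := by rw [hJ₀, map_sub]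
        _ ≤ a * ε := (hW _).trans hz
  · calc (#((N.image W).image WithLp.ofLp) : ℝ) ≤ #N := by
          exact_mod_cast card_image_le.trans card_image_le
      _ ≤ (∏ i, τ i) * (3 / a) ^ P := by rwa [Fintype.card_fin] at hcard
      _ ≤ (12 * √((K : ℝ) / P)) ^ P :=
          prod_mul_pow_le_of_sum_sq_le ha (fun i ↦ ha.le.trans (hτ i)) hτ_sum_le

/-- the image of the ε-ball of ℝ^P under a matrix `J₀` with Frobenius
norm at most `√K·a` admits an `(a·ε)`-net of cardinality at most `(12√(K/P))^P`. -/
theorem ellipsoid_covering (K P n : ℕ) (hP : 1 ≤ P) (hPK : P ≤ K)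
    (a ε : ℝ) (ha : 0 < a) (hε : 0 < ε)
    (J₀ : Matrix (Fin n) (Fin P) ℝ)
    (hJ : frobNorm J₀ ≤ Real.sqrt K * a) :
    ∃ N : Finset (Fin n → ℝ),
      (∀ x : Fin P → ℝ, eNorm x ≤ ε →
        ∃ z ∈ N, eNorm (J₀.mulVec x - z) ≤ a * ε) ∧
      (N.card : ℝ) ≤ (12 * Real.sqrt ((K : ℝ) / P)) ^ P :=
  ellipsoid_covering_general K P n hPK a ε ha hε J₀ hJ
end
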